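/- arXiv:1311.7123 — 7 statements merged into one kernel-verified Lean document; each statement's English description precedes it below -/
import Mathlib

section
/- An R-module M is flat if and only if M can be written as a filtered colimit of finitely generated free R-modules. -/
/-!
Flat ⟹ colimit: every module is the colimit of the category of all maps `R^n → M` from finite
free modules (an element `m` is hit by `R → M, 1 ↦ m`, and linearity is tested on `R^2`). This
category always has upper bounds (`R^n ⊕ R^m`); flatness is what lets two parallel maps
`R^n ⇉ R^m` over `M` be coequalized over `M`, so it is filtered.

Colimit ⟹ flat: by the equational criterion. A relation `∑ fᵢ xᵢ = 0` in a filtered colimit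
lifts to some stage and holds already at a later stage; there it is trivial since that stage
is flat, and trivial relations are preserved by linear maps.
-/

open CategoryTheory CategoryTheory.Limits

universe u

namespace Module.IsTrivialRelation

variable {R M N : Type*} [CommRing R] [AddCommGroup M] [Module R M] [AddCommGroup N] [Module R N]
  {ι : Type*} [Fintype ι] {f : ι → R} {x : ι → M}

theorem map (h : IsTrivialRelation f x) (g : M →ₗ[R] N) : IsTrivialRelation f (g ∘ x) := by
  obtain ⟨k, a, y, hxy, ha⟩ := h
  exact ⟨k, a, g ∘ y, fun i => by simp [hxy], ha⟩

end Module.IsTrivialRelation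

namespace ModuleCat

variable {R : Type u} [Ring R] {J : Type u} [SmallCategory J] [IsFiltered J]
  {F : J ⥤ ModuleCat.{u} R} {c : Cocone F}

theorem exists_lift_of_isColimit (hc : IsColimit c) {ι : Type*} [Finite ι] (x : ι → c.pt) :
    ∃ (j : J) (y : ι → F.obj j), ∀ i, c.ι.app j (y i) = x i := by
  classical
  have := Fintype.ofFinite ι
  choose j y hy using fun i => Concrete.isColimit_exists_rep F hc (x i)
  obtain ⟨S, hS⟩ := IsFiltered.sup_objs_exists (Finset.univ.image j)
  have t (i : ι) : j i ⟶ S := (hS (Finset.mem_image_of_mem j (Finset.mem_univ i))).some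
  refine ⟨S, fun i => F.map (t i) (y i), fun i => ?_⟩
  rw [← hy i, ← ConcreteCategory.comp_apply, c.w]

theorem exists_map_eq_zero_of_isColimit (hc : IsColimit c) {j : J} {y : F.obj j}
    (hy : c.ι.app j y = 0) : ∃ (k : J) (g : j ⟶ k), F.map g y = 0 := by
  rw [← map_zero (c.ι.app j).hom] at hy
  obtain ⟨k, g, g', hgg'⟩ := Concrete.isColimit_exists_of_rep_eq F hc y 0 hy
  exact ⟨k, g, hgg'.trans (map_zero _)⟩

end ModuleCat

namespace Module.Flat

variable {R : Type u} [CommRing R] {J : Type u} [SmallCategory J] [IsFiltered J]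
  {F : J ⥤ ModuleCat.{u} R} {c : Cocone F}

theorem of_isColimit [∀ j, Flat R (F.obj j)] (hc : IsColimit c) : Flat R c.pt := by
  refine of_forall_isTrivialRelation fun {l f x} hfx => ?_
  obtain ⟨j, y, hy⟩ := ModuleCat.exists_lift_of_isColimit hc x
  have hw : c.ι.app j (∑ i, f i • y i) = 0 := by simp [hy, hfx]
  obtain ⟨k, g, hg⟩ := ModuleCat.exists_map_eq_zero_of_isColimit hc hw
  have hrel : IsTrivialRelation f (F.map g ∘ y) :=
    isTrivialRelation_of_sum_smul_eq_zero (by simpa using hg)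
  have hx : (c.ι.app k).hom ∘ F.map g ∘ y = x := funext fun i => by
    simp [← hy i, ← ConcreteCategory.comp_apply, c.w]
  exact hx ▸ hrel.map (c.ι.app k).hom

end Module.Flat

namespace Module

structure FinFreeOver (R : Type u) [CommRing R] (M : Type u) [AddCommGroup M] [Module R M] where
  n : ℕ
  x : (Fin n →₀ R) →ₗ[R] M

noncomputable section

namespace FinFreeOver

variable {R : Type u} [CommRing R] {M : Type u} [AddCommGroup M] [Module R M]

instance : SmallCategory (FinFreeOver R M) where
  Hom P Q := {a : (Fin P.n →₀ R) →ₗ[R] (Fin Q.n →₀ R) // Q.x ∘ₗ a = P.x}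
  id P := ⟨LinearMap.id, LinearMap.comp_id _⟩
  comp f g := ⟨g.1 ∘ₗ f.1, by rw [← LinearMap.comp_assoc, g.2, f.2]⟩

@[simp] lemma comp_val {P Q T : FinFreeOver R M} (f : P ⟶ Q) (g : Q ⟶ T) :
    (f ≫ g).1 = g.1 ∘ₗ f.1 := rfl

@[ext] lemma hom_ext {P Q : FinFreeOver R M} {f g : P ⟶ Q} (h : f.1 = g.1) : f = g :=
  Subtype.ext h

variable (R M) in
abbrev diagram : FinFreeOver R M ⥤ ModuleCat.{u} R where
  obj P := ModuleCat.of R (Fin P.n →₀ R)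
  map f := ModuleCat.ofHom f.1

variable (R M) in
@[simps]
abbrev cocone : Cocone (diagram R M) where
  pt := ModuleCat.of R M
  ι.app P := ModuleCat.ofHom P.x
  ι.naturality _ _ f := by ext1; exact f.2

lemma naturality_apply (s : Cocone (diagram R M)) {P Q : FinFreeOver R M} (t : P ⟶ Q)
    (v : Fin P.n →₀ R) : s.ι.app Q (t.1 v) = s.ι.app P v :=
  LinearMap.congr_fun (congrArg ModuleCat.Hom.hom (s.w t)) v

variable (R) in
abbrev ofElement (m : M) : FinFreeOver R M :=
  ⟨1, Finsupp.linearCombination R fun _ => m⟩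

lemma ofElement_x_single (m : M) : (ofElement R m).x (Finsupp.single 0 1) = m :=
  (Finsupp.linearCombination_single R _ _).trans (one_smul R m)

def homOfElement (P : FinFreeOver R M) (v : Fin P.n →₀ R) : ofElement R (P.x v) ⟶ P :=
  ⟨Finsupp.linearCombination R fun _ => v, by ext; simp⟩

section Desc

variable (s : Cocone (diagram R M))

def descFun (m : M) : s.pt :=
  s.ι.app (ofElement R m) (Finsupp.single 0 1)

lemma descFun_x (P : FinFreeOver R M) (v : Fin P.n →₀ R) : descFun s (P.x v) = s.ι.app P v := by
  rw [descFun, ← naturality_apply s (homOfElement P v)]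
  congr 1
  simp [homOfElement]

lemma descFun_add (m m' : M) : descFun s (m + m') = descFun s m + descFun s m' := by
  let T : FinFreeOver R M := ⟨2, Finsupp.linearCombination R ![m, m']⟩
  have hm : T.x (Finsupp.single 0 1) = m := by simp [T]
  have hm' : T.x (Finsupp.single 1 1) = m' := by simp [T]
  rw [← hm, ← hm', ← map_add, descFun_x, descFun_x, descFun_x]
  exact map_add (s.ι.app T).hom _ _

lemma descFun_smul (r : R) (m : M) : descFun s (r • m) = r • descFun s m := by
  have hm : (ofElement R m).x (r • Finsupp.single 0 1) = r • m := by
    rw [map_smul, ofElement_x_single]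
  rw [← hm, descFun_x]
  exact map_smul (s.ι.app _).hom _ _

def desc : M →ₗ[R] s.pt where
  toFun := descFun s
  map_add' := descFun_add s
  map_smul' := descFun_smul s

end Desc

variable (R M) in
def isColimitCocone : IsColimit (cocone R M) where
  desc s := ModuleCat.ofHom (desc s)
  fac s P := by ext1; exact LinearMap.ext (descFun_x s P)
  uniq s g hg := by
    ext1
    refine LinearMap.ext fun m => ?_
    have := LinearMap.congr_fun (congrArg ModuleCat.Hom.hom (hg (ofElement R m)))
      (Finsupp.single 0 1)
    rw [ModuleCat.hom_comp, LinearMap.comp_apply, cocone_ι_app, ModuleCat.hom_ofHom,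
      ofElement_x_single] at this
    exact this

theorem isFiltered [Flat R M] : IsFiltered (FinFreeOver R M) where
  nonempty := ⟨⟨0, 0⟩⟩
  cocone_objs P Q := by
    let e : (Fin (P.n + Q.n) →₀ R) ≃ₗ[R] (Fin P.n →₀ R) × (Fin Q.n →₀ R) :=
      (Finsupp.domLCongr finSumFinEquiv.symm).trans (Finsupp.sumFinsuppLEquivProdFinsupp R)
    refine ⟨⟨P.n + Q.n, P.x.coprod Q.x ∘ₗ e.toLinearMap⟩,
      ⟨e.symm.toLinearMap ∘ₗ LinearMap.inl R _ _, ?_⟩,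
      ⟨e.symm.toLinearMap ∘ₗ LinearMap.inr R _ _, ?_⟩, trivial⟩ <;>
    · ext; simp
  cocone_maps P Q f g := by
    -- `Q.x` kills the image of `f - g`, so by flatness it factors through some `R^k`
    -- by a map that already kills it.
    have h : Q.x ∘ₗ (f.1 - g.1) = 0 := by rw [LinearMap.comp_sub, f.2, g.2, sub_self]
    obtain ⟨k, a, y, hya, ha⟩ := Flat.exists_factorization_of_comp_eq_zero_of_free h
    refine ⟨⟨k, y⟩, ⟨a, hya.symm⟩, ?_⟩
    ext1
    exact LinearMap.ext fun v => sub_eq_zero.mp (by simpa using LinearMap.congr_fun ha v)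

end FinFreeOver

end

end Module

/-- **Lazard's theorem**: a module `M` over a ring `R` is flat if and only if `M` can be
written as a filtered colimit of finitely generated free `R`-modules. -/
theorem lazard_flat_iff_filtered_colimit_of_finite_free
    (R : Type u) [CommRing R] (M : Type u) [AddCommGroup M] [Module R M] :
    Module.Flat R M ↔
      ∃ (J : Type u) (_ : SmallCategory J) (_ : IsFiltered J) (F : J ⥤ ModuleCat.{u} R)
        (c : Cocone F) (_ : IsColimit c),
        (∀ j : J, Module.Free R (F.obj j) ∧ Module.Finite R (F.obj j)) ∧
          Nonempty (c.pt ≅ ModuleCat.of R M) := by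
  constructor
  · intro
    exact ⟨Module.FinFreeOver R M, inferInstance, Module.FinFreeOver.isFiltered,
      Module.FinFreeOver.diagram R M, Module.FinFreeOver.cocone R M,
      Module.FinFreeOver.isColimitCocone R M, fun _ => ⟨inferInstance, inferInstance⟩,
      ⟨Iso.refl _⟩⟩
  · rintro ⟨J, _, _, F, c, hc, hfree, ⟨e⟩⟩
    have (j : J) : Module.Flat R (F.obj j) := have := (hfree j).1; inferInstance
    have := Module.Flat.of_isColimit hc
    exact Module.Flat.of_linearEquiv e.symm.toLinearEquiv
end

section
/- An R-module M is flat if and only if every map C → M from a finitely presented module C factors through some finitely generated free R-module F. -/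
universe u

open Module LinearMap

section

variable {R : Type u} [CommRing R]

lemma Module.finitePresentation_quotient_of_fg {N : Type*} [AddCommGroup N] [Module R N]
    [FinitePresentation R N] {K : Submodule R N} (hK : K.FG) : FinitePresentation R (N ⧸ K) :=
  finitePresentation_of_surjective K.mkQ K.mkQ_surjective (by rwa [Submodule.ker_mkQ])

lemma Module.Free.exists_factorization_through_fin {C F M : Type*} [AddCommGroup C] [Module R C]
    [AddCommGroup F] [Module R F] [Free R F] [Module.Finite R F] [AddCommGroup M] [Module R M]
    (g : C →ₗ[R] F) (h : F →ₗ[R] M) :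
    ∃ (k : ℕ) (g' : C →ₗ[R] (Fin k →₀ R)) (h' : (Fin k →₀ R) →ₗ[R] M), h ∘ₗ g = h' ∘ₗ g' := by
  let e := ((Free.chooseBasis R F).reindex (Fintype.equivFin _)).repr
  refine ⟨_, e.toLinearMap ∘ₗ g, h ∘ₗ e.symm.toLinearMap, ?_⟩
  ext c
  simp

theorem Module.Flat.of_forall_exists_factorization_of_finitePresentation {M : Type*}
    [AddCommGroup M] [Module R M]
    (H : ∀ (C : Type u) [AddCommGroup C] [Module R C] [FinitePresentation R C] (f : C →ₗ[R] M),
      ∃ (k : ℕ) (g : C →ₗ[R] (Fin k →₀ R)) (h : (Fin k →₀ R) →ₗ[R] M), f = h ∘ₗ g) :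
    Flat R M := by
  refine of_forall_exists_factorization fun {l f x} hxf => ?_
  -- `x` descends to the finitely presented module `Rˡ / R f`; factor the induced map instead.
  set K := Submodule.span R {f}
  have : FinitePresentation R ((Fin l →₀ R) ⧸ K) :=
    finitePresentation_quotient_of_fg (Submodule.fg_span_singleton f)
  have hKx : K ≤ ker x := (Submodule.span_singleton_le_iff_mem f _).mpr hxf
  obtain ⟨k, g, h, hgh⟩ := H _ (K.liftQ x hKx)
  refine ⟨k, g ∘ₗ K.mkQ, h, ?_, ?_⟩
  · rw [← comp_assoc, ← hgh, Submodule.liftQ_mkQ]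
  · rw [comp_apply, Submodule.mkQ_apply,
      (Submodule.Quotient.mk_eq_zero K).mpr (Submodule.mem_span_singleton_self f), map_zero]

end

/-- **Lazard's criterion**: a module `M` over a ring `R` is flat if and only if every map
`C → M` from a finitely presented module `C` factors through some finitely generated free
`R`-module `F`. -/
theorem lazard_flat_iff_factors_through_finite_free
    (R : Type u) [CommRing R] (M : Type u) [AddCommGroup M] [Module R M] :
    Module.Flat R M ↔
      ∀ (C : Type u) [AddCommGroup C] [Module R C], Module.FinitePresentation R C →
        ∀ f : C →ₗ[R] M,
          ∃ (F : Type u) (_ : AddCommGroup F) (_ : Module R F),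
            Module.Free R F ∧ Module.Finite R F ∧
              ∃ (g : C →ₗ[R] F) (h : F →ₗ[R] M), h.comp g = f := by
  constructor
  · intro _ C _ _ _ f
    obtain ⟨k, g, h, hf⟩ := Flat.exists_factorization_of_finitePresentation f
    exact ⟨Fin k →₀ R, _, _, inferInstance, inferInstance, g, h, hf.symm⟩
  · intro H
    refine Flat.of_forall_exists_factorization_of_finitePresentation fun C _ _ _ f => ?_
    obtain ⟨F, _, _, _, _, g, h, rfl⟩ := H C ‹_› f
    exact Free.exists_factorization_through_fin g h
end

section
/- For an even positive integer m, the abelian group with generators a and b and relations m·a = 0 and m·b = -(m choose 2)·a (where (m choose 2) = m(m-1)/2) is isomorphic to ℤ/(2m) ⊕ ℤ/(m/2), with generators b and a + 2b respectively. -/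
/-!
Write `m = 2k` and send `x a + y b` to `(y - 2x, x) ∈ ℤ/4k × ℤ/k`, i.e. read it in the basis
`b`, `a + 2b`. This map is onto, and its kernel `{(x, y) | k ∣ x, 4k ∣ y - 2x}` is spanned by the
relation vectors `(2k, 0)` and `(k(2k - 1), 2k)`: a kernel element with `x = k t`,
`y - 2x = 4k s` equals `-((2k - 1)s + (k - 1)t) • (2k, 0) + (2s + t) • (k(2k - 1), 2k)`.
-/

/-- The subgroup of relations: for generators `a = (1,0)` and `b = (0,1)` of `ℤ × ℤ`,
the relations `m·a = 0` and `m·b = -(m choose 2)·a` correspond to the subgroup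
generated by `(m, 0)` and `((m choose 2), m)`, where `(m choose 2) = m(m-1)/2`. -/
def lambdaWeightTwoRelations (m : ℕ) : AddSubgroup (ℤ × ℤ) :=
  AddSubgroup.closure {((m : ℤ), 0), (((m * (m - 1) / 2 : ℕ) : ℤ), (m : ℤ))}

namespace LambdaWeightTwo

def coords (m : ℕ) : ℤ × ℤ →+ ZMod (2 * m) × ZMod (m / 2) :=
  AddMonoidHom.mk' (fun p => ((p.2 - 2 * p.1 : ℤ), (p.1 : ZMod (m / 2))))
    (fun p q => by ext <;> push_cast [Prod.fst_add, Prod.snd_add] <;> ring)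

@[simp]
theorem coords_apply (m : ℕ) (p : ℤ × ℤ) :
    coords m p = (((p.2 - 2 * p.1 : ℤ) : ZMod (2 * m)), (p.1 : ZMod (m / 2))) :=
  rfl

theorem coords_surjective (m : ℕ) : Function.Surjective (coords m) := by
  rintro ⟨u, v⟩
  obtain ⟨x, rfl⟩ := ZMod.intCast_surjective v
  obtain ⟨z, rfl⟩ := ZMod.intCast_surjective u
  exact ⟨(x, z + 2 * x), by simp⟩

theorem coords_two_mul_eq_zero_iff (k : ℕ) (p : ℤ × ℤ) :
    coords (2 * k) p = 0 ↔ (4 * k : ℤ) ∣ p.2 - 2 * p.1 ∧ (k : ℤ) ∣ p.1 := by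
  simp only [coords_apply, Prod.ext_iff, Prod.fst_zero, Prod.snd_zero,
    ZMod.intCast_zmod_eq_zero_iff_dvd, Nat.mul_div_cancel_left k two_pos]
  push_cast
  ring_nf

theorem cast_two_mul_mul_sub_one_div_two (k : ℕ) :
    (((2 * k) * (2 * k - 1) / 2 : ℕ) : ℤ) = k * (2 * k - 1) := by
  rw [mul_assoc, Nat.mul_div_cancel_left _ two_pos]
  rcases k.eq_zero_or_pos with rfl | hk
  · simp
  · push_cast [Nat.cast_sub (by omega : 1 ≤ 2 * k)]
    ring

theorem relations_two_mul (k : ℕ) :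
    lambdaWeightTwoRelations (2 * k) =
      AddSubgroup.closure {((2 * k : ℤ), (0 : ℤ)), ((k * (2 * k - 1) : ℤ), (2 * k : ℤ))} := by
  rw [lambdaWeightTwoRelations, cast_two_mul_mul_sub_one_div_two]
  push_cast
  rfl

theorem ker_coords_two_mul (k : ℕ) :
    (coords (2 * k)).ker = lambdaWeightTwoRelations (2 * k) := by
  rw [relations_two_mul]
  apply le_antisymm
  · rintro ⟨x, y⟩ hp
    obtain ⟨⟨s, hs⟩, ⟨t, ht⟩⟩ := (coords_two_mul_eq_zero_iff k _).mp hp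
    have hxy : (x, y) = (-((2 * k - 1) * s + (k - 1) * t)) • ((2 * k : ℤ), (0 : ℤ)) +
        (2 * s + t) • ((k * (2 * k - 1) : ℤ), (2 * k : ℤ)) := by
      ext <;> simp only [Prod.fst_add, Prod.snd_add, Prod.smul_fst, Prod.smul_snd, smul_eq_mul]
      · linear_combination ht
      · linear_combination hs + 2 * ht
    rw [hxy]
    exact add_mem (zsmul_mem (AddSubgroup.subset_closure (by simp)) _)
      (zsmul_mem (AddSubgroup.subset_closure (by simp)) _)
  · rw [AddSubgroup.closure_le]
    rintro p (rfl | rfl) <;> rw [SetLike.mem_coe, AddMonoidHom.mem_ker, coords_two_mul_eq_zero_iff]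
    · exact ⟨⟨-1, by ring⟩, ⟨2, by ring⟩⟩
    · exact ⟨⟨1 - k, by ring⟩, ⟨2 * k - 1, rfl⟩⟩

end LambdaWeightTwo

open LambdaWeightTwo in
theorem lambdaWeightTwo_of_even_general (m : ℕ) (heven : Even m) :
    ∃ e : (ℤ × ℤ) ⧸ lambdaWeightTwoRelations m ≃+ ZMod (2 * m) × ZMod (m / 2),
      e (QuotientAddGroup.mk ((0, 1) : ℤ × ℤ)) = ((1 : ZMod (2 * m)), (0 : ZMod (m / 2))) ∧
      e (QuotientAddGroup.mk ((1, 2) : ℤ × ℤ)) = ((0 : ZMod (2 * m)), (1 : ZMod (m / 2))) := by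
  obtain ⟨k, rfl⟩ := heven.two_dvd
  refine ⟨(QuotientAddGroup.quotientAddEquivOfEq (ker_coords_two_mul k).symm).trans
    (QuotientAddGroup.quotientKerEquivOfSurjective _ (coords_surjective _)), ?_, ?_⟩ <;>
  simp [QuotientAddGroup.quotientKerEquivOfSurjective, QuotientAddGroup.kerLift_mk]

/-- For an even positive integer `m`, the abelian group with generators `a`, `b` and
relations `m·a = 0`, `m·b = -(m choose 2)·a` (this is `T^λ_{ℤ,2}(ℤ/m)`) is isomorphic
to `ℤ/(2m) ⊕ ℤ/(m/2)`, with generators `b` and `a + 2b` respectively. -/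
theorem lambdaWeightTwo_of_even (m : ℕ) (hm : 0 < m) (heven : Even m) :
    ∃ e : (ℤ × ℤ) ⧸ lambdaWeightTwoRelations m ≃+ ZMod (2 * m) × ZMod (m / 2),
      e (QuotientAddGroup.mk ((0, 1) : ℤ × ℤ)) = ((1 : ZMod (2 * m)), (0 : ZMod (m / 2))) ∧
      e (QuotientAddGroup.mk ((1, 2) : ℤ × ℤ)) = ((0 : ZMod (2 * m)), (1 : ZMod (m / 2))) :=
  lambdaWeightTwo_of_even_general m heven
end

section
/- For every positive integer m and every integer p ≥ 1, and for every conjugacy class c of the symmetric group Σ_m whose cycle type has l cycles, the number of pairs (H, s) where H = Σ_{i₁} × ⋯ × Σ_{i_p} ranges over Young subgroups with i₁+⋯+i_p = m and s ranges over coset representatives in H\Σ_m such that s⁻¹gs ∈ H for a fixed g ∈ c, equals p^l. -/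
open Equiv

/-- The block label of `k ∈ {0,…,m-1}` for the composition `i = (i₁,…,i_p)` of `m`:
the index `j` such that `k` lies in the `j`-th block of `{0,…,m-1}` when it is divided
blockwise into consecutive intervals of sizes `i₁,…,i_p`. -/
def blockLabel {p : ℕ} (i : Fin p → ℕ) (k : ℕ) : ℕ :=
  (Finset.univ.filter fun j : Fin p => (∑ j' ∈ Finset.univ.filter (· ≤ j), i j') ≤ k).card

/-- The Young subgroup `Σ_{i₁} × ⋯ × Σ_{i_p}` of `Σ_m` associated to an ordered
`p`-tuple `(i₁,…,i_p)` of non-negative integers summing to `m`, embedded blockwise: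
the subgroup of permutations preserving each block. -/
def youngSubgroup (m p : ℕ) (i : Fin p → ℕ) : Subgroup (Perm (Fin m)) where
  carrier := {σ | ∀ k : Fin m, blockLabel i (σ k : ℕ) = blockLabel i (k : ℕ)}
  one_mem' := by intro k; rfl
  mul_mem' := by
    intro a b ha hb k
    simpa [Perm.mul_apply] using (ha (b k)).trans (hb k)
  inv_mem' := by
    intro a ha k
    simpa using (ha (a⁻¹ k)).symm

/-- The number of cycles of a permutation `g` of `{1,…,m}`, counting fixed points as
`1`-cycles (so that the cycle lengths form a partition of `m`). -/
def numCycles {m : ℕ} (g : Perm (Fin m)) : ℕ :=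
  g.cycleType.card + (m - g.cycleType.sum)

/-!
The coset `s H` of the Young subgroup `H = Σ_{i₁} × ⋯ × Σ_{i_p}` is determined by the
labelling `k ↦ (block containing s⁻¹ k)` of `{0,…,m-1}` by `{0,…,p-1}`, whose fibres have
sizes `i₁,…,i_p`. Letting the composition `i` vary, the pairs `(i, s H)` therefore correspond
bijectively to all labellings `Fin m → Fin p`. The condition `s⁻¹ g s ∈ H` says exactly that
the labelling is constant along the cycles of `g`, and there are `p ^ l` such labellings.
-/

open Finset

theorem Fin.sum_univ_castLE_eq_sum_Iio {M : Type*} [AddCommMonoid M] {p : ℕ} (f : Fin p → M)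
    (j : Fin p) : ∑ j' : Fin j, f (Fin.castLE j.2.le j') = ∑ j' ∈ Iio j, f j' := by
  have hmap : (univ : Finset (Fin j)).map (Fin.castLEEmb j.2.le) = Iio j := by
    ext x
    simp only [mem_map, mem_univ, true_and, mem_Iio]
    exact ⟨fun ⟨a, ha⟩ => ha ▸ a.2, fun h => ⟨⟨x, h⟩, rfl⟩⟩
  rw [← hmap, sum_map]
  rfl

namespace Equiv.Perm

variable {α : Type*} (g : Perm α)

theorem sameCycle_setoid_le_ker_iff [Finite α] {β : Type*} (f : α → β) :
    SameCycle.setoid g ≤ Setoid.ker f ↔ ∀ a, f (g a) = f a := by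
  refine ⟨fun h a => (h (sameCycle_apply_right.2 (SameCycle.refl g a))).symm,
    fun h x y hxy => ?_⟩
  obtain ⟨n, -, rfl⟩ := hxy.exists_pow_eq'
  clear hxy
  induction n with
  | zero => rfl
  | succ n ih => rw [Setoid.ker_def, pow_succ', mul_apply, h]; exact ih

theorem card_invariant_fun [Finite α] (β : Type*) :
    Nat.card {f : α → β // ∀ a, f (g a) = f a} =
      Nat.card β ^ Nat.card (Quotient (SameCycle.setoid g)) := by
  rw [← Nat.card_fun]
  exact Nat.card_congr <| (Equiv.subtypeEquivRight fun f =>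
    (sameCycle_setoid_le_ker_iff g f).symm).trans (Setoid.liftEquiv _)

section Fintype

variable [Fintype α] [DecidableEq α]

def cycleOfQuotient : Quotient (SameCycle.setoid g) → Perm α :=
  Quotient.lift g.cycleOf fun _ _ h => h.cycleOf_eq

theorem card_cycleOfQuotient_ne_one :
    Nat.card {q // cycleOfQuotient g q ≠ 1} = g.cycleType.card := by
  rw [cycleType_def, Multiset.card_map, ← card_def, ← Nat.card_eq_finsetCard]
  refine Nat.card_eq_of_bijective (fun q => ⟨cycleOfQuotient g q, ?_⟩) ⟨?_, ?_⟩
  · obtain ⟨⟨x⟩, hx⟩ := q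
    exact cycleOf_mem_cycleFactorsFinset_iff.2 (mem_support.2 ((cycleOf_eq_one_iff g).not.1 hx))
  · rintro ⟨⟨x⟩, hx⟩ ⟨⟨y⟩, hy⟩ h
    have hxy : y ∈ (g.cycleOf x).support := by
      rw [show g.cycleOf x = g.cycleOf y from congrArg Subtype.val h, mem_support_cycleOf_iff]
      exact ⟨SameCycle.refl g y, mem_support.2 ((cycleOf_eq_one_iff g).not.1 hy)⟩
    exact Subtype.ext (Quotient.sound (mem_support_cycleOf_iff.1 hxy).1)
  · rintro ⟨c, hc⟩
    have hcycle := (mem_cycleFactorsFinset_iff.1 hc).1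
    obtain ⟨a, ha⟩ := hcycle.nonempty_support
    have hca := cycle_is_cycleOf ha hc
    exact ⟨⟨Quotient.mk _ a, fun h => hcycle.ne_one (hca.trans h)⟩, Subtype.ext hca.symm⟩

theorem card_cycleOfQuotient_eq_one :
    Nat.card {q // cycleOfQuotient g q = 1} = Fintype.card α - g.cycleType.sum := by
  rw [← card_fixedPoints, ← Nat.card_eq_fintype_card]
  refine (Nat.card_eq_of_bijective
    (fun x : Function.fixedPoints g => ⟨Quotient.mk _ x.1, (cycleOf_eq_one_iff g).2 x.2⟩)
    ⟨?_, ?_⟩).symm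
  · rintro ⟨x, hx⟩ ⟨y, _⟩ h
    exact Subtype.ext ((Quotient.exact (congrArg Subtype.val h)).eq_of_left hx)
  · rintro ⟨⟨x⟩, hx⟩
    exact ⟨⟨x, (cycleOf_eq_one_iff g).1 hx⟩, rfl⟩

theorem card_quotient_sameCycle :
    Nat.card (Quotient (SameCycle.setoid g)) =
      g.cycleType.card + (Fintype.card α - g.cycleType.sum) := by
  rw [← Nat.card_congr (Equiv.sumCompl fun q => cycleOfQuotient g q ≠ 1), Nat.card_sum,
    card_cycleOfQuotient_ne_one]
  simp only [not_not, card_cycleOfQuotient_eq_one]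

end Fintype

end Equiv.Perm

section Blocks

variable {m p : ℕ} {i : Fin p → ℕ}

theorem blockLabel_finSigmaFinEquiv (x : Σ j, Fin (i j)) :
    blockLabel i (finSigmaFinEquiv x) = x.1 := by
  obtain ⟨j, t⟩ := x
  have hIic (j' : Fin p) : univ.filter (· ≤ j') = Iic j' := by ext; simp
  rw [finSigmaFinEquiv_apply, Fin.sum_univ_castLE_eq_sum_Iio, blockLabel]
  simp_rw [hIic]
  suffices univ.filter (fun j' => ∑ j'' ∈ Iic j', i j'' ≤ ∑ j'' ∈ Iio j, i j'' + t) =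
      Iio j by
    rw [this, Fin.card_Iio]
  ext j'
  simp only [mem_filter, mem_univ, true_and, mem_Iio]
  constructor
  · intro h
    by_contra! hj
    have hle := sum_le_sum_of_subset (f := i) (Iic_subset_Iic.2 hj)
    rw [← Iio_insert, sum_insert notMem_Iio_self] at hle
    omega
  · intro h
    calc ∑ j'' ∈ Iic j', i j'' ≤ ∑ j'' ∈ Iio j, i j'' :=
          sum_le_sum_of_subset fun _ hx => mem_Iio.2 ((mem_Iic.1 hx).trans_lt h)
      _ ≤ _ := Nat.le_add_right _ _

variable (hi : ∑ j, i j = m)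

def blockOf (k : Fin m) : Fin p :=
  (finSigmaFinEquiv.symm (k.cast hi.symm)).1

theorem blockLabel_eq_blockOf (k : Fin m) : blockLabel i k = blockOf hi k := by
  simpa [blockOf] using blockLabel_finSigmaFinEquiv (finSigmaFinEquiv.symm (k.cast hi.symm))

theorem card_blockOf_fiber (j : Fin p) : Fintype.card {k // blockOf hi k = j} = i j :=
  calc Fintype.card {k // blockOf hi k = j}
      = Fintype.card {x : Σ j, Fin (i j) // x.1 = j} :=
        Fintype.card_congr (((finCongr hi.symm).trans finSigmaFinEquiv.symm).subtypeEquiv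
          fun _ => Iff.rfl)
    _ = i j := by rw [Fintype.card_congr (Equiv.sigmaSubtype j), Fintype.card_fin]

theorem mem_youngSubgroup_iff {σ : Perm (Fin m)} :
    σ ∈ youngSubgroup m p i ↔ ∀ k, blockOf hi (σ k) = blockOf hi k := by
  show (∀ k : Fin m, blockLabel i (σ k) = blockLabel i k) ↔ _
  simp only [blockLabel_eq_blockOf hi, Fin.val_inj]

end Blocks

section CosetLabel

variable {m p : ℕ} {i : Fin p → ℕ} (hi : ∑ j, i j = m)

def cosetLabel : Perm (Fin m) ⧸ youngSubgroup m p i → Fin m → Fin p :=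
  Quotient.lift (fun s k => blockOf hi (s⁻¹ k)) fun s s' h => funext fun k => by
    have := (mem_youngSubgroup_iff hi).1 (QuotientGroup.leftRel_apply.1 h) (s'⁻¹ k)
    simpa [Perm.mul_apply] using this

theorem cosetLabel_mk (s : Perm (Fin m)) (k : Fin m) :
    cosetLabel hi (s : Perm (Fin m) ⧸ youngSubgroup m p i) k = blockOf hi (s⁻¹ k) :=
  rfl

theorem cosetLabel_injective : Function.Injective (cosetLabel hi) := by
  intro q q' h
  obtain ⟨s, rfl⟩ := QuotientGroup.mk_surjective q
  obtain ⟨s', rfl⟩ := QuotientGroup.mk_surjective q'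
  rw [QuotientGroup.eq, mem_youngSubgroup_iff hi]
  intro k
  simpa [cosetLabel_mk, Perm.mul_apply] using congrFun h (s' k)

theorem card_cosetLabel_fiber (q : Perm (Fin m) ⧸ youngSubgroup m p i) (j : Fin p) :
    Fintype.card {k // cosetLabel hi q k = j} = i j := by
  obtain ⟨s, rfl⟩ := QuotientGroup.mk_surjective q
  rw [← card_blockOf_fiber hi j]
  exact Fintype.card_congr (s.symm.subtypeEquiv fun _ => Iff.rfl)

theorem exists_cosetLabel_eq (f : Fin m → Fin p)
    (hf : ∀ j, Fintype.card {k // f k = j} = i j) : ∃ q, cosetLabel hi q = f := by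
  let e (j : Fin p) : {k // blockOf hi k = j} ≃ {k // f k = j} :=
    Fintype.equivOfCardEq ((card_blockOf_fiber hi j).trans (hf j).symm)
  refine ⟨Equiv.ofFiberEquiv e, funext fun k => ?_⟩
  have := Equiv.ofFiberEquiv_map e ((Equiv.ofFiberEquiv e)⁻¹ k)
  rw [Perm.coe_inv, apply_symm_apply] at this
  exact this.symm

theorem conj_mem_youngSubgroup_iff (g s : Perm (Fin m)) :
    s⁻¹ * g * s ∈ youngSubgroup m p i ↔
      ∀ k, cosetLabel hi (s : Perm (Fin m) ⧸ youngSubgroup m p i) (g k) =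
        cosetLabel hi s k := by
  rw [mem_youngSubgroup_iff hi]
  conv_rhs => rw [← s.forall_congr_right]
  simp [cosetLabel_mk, Perm.mul_apply]

theorem exists_conj_mem_youngSubgroup_iff (g : Perm (Fin m))
    (q : Perm (Fin m) ⧸ youngSubgroup m p i) :
    (∃ s : Perm (Fin m), (s : Perm (Fin m) ⧸ youngSubgroup m p i) = q ∧
        s⁻¹ * g * s ∈ youngSubgroup m p i) ↔
      ∀ k, cosetLabel hi q (g k) = cosetLabel hi q k := by
  constructor
  · rintro ⟨s, rfl, hs⟩
    exact (conj_mem_youngSubgroup_iff hi g s).1 hs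
  · obtain ⟨s, rfl⟩ := QuotientGroup.mk_surjective q
    exact fun h => ⟨s, rfl, (conj_mem_youngSubgroup_iff hi g s).2 h⟩

end CosetLabel

theorem sum_card_fiber {m p : ℕ} (f : Fin m → Fin p) :
    ∑ j, Fintype.card {k // f k = j} = m := by
  rw [← Fintype.card_sigma, Fintype.card_congr (sigmaFiberEquiv f), Fintype.card_fin]

def youngCosetLabel (m p : ℕ) :
    (Σ i : {i : Fin p → ℕ // ∑ j, i j = m}, Perm (Fin m) ⧸ youngSubgroup m p i.1) →
      Fin m → Fin p :=
  fun x => cosetLabel x.1.2 x.2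

theorem youngCosetLabel_bijective (m p : ℕ) : Function.Bijective (youngCosetLabel m p) := by
  constructor
  · rintro ⟨⟨i, hi⟩, q⟩ ⟨⟨i', hi'⟩, q'⟩ h
    simp only [youngCosetLabel] at h
    obtain rfl : i = i' := funext fun j => by
      rw [← card_cosetLabel_fiber hi q j, ← card_cosetLabel_fiber hi' q' j, h]
    obtain rfl := cosetLabel_injective hi h
    rfl
  · intro f
    obtain ⟨q, hq⟩ := exists_cosetLabel_eq (sum_card_fiber f) f fun _ => rfl
    exact ⟨⟨⟨_, sum_card_fiber f⟩, q⟩, hq⟩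

theorem card_young_cosets_conj_eq_pow_general
    (m p : ℕ) (g : Perm (Fin m)) :
    Nat.card
      {x : Σ i : {i : Fin p → ℕ // ∑ j, i j = m}, Perm (Fin m) ⧸ youngSubgroup m p i.1 //
        ∃ s : Perm (Fin m), (QuotientGroup.mk s : Perm (Fin m) ⧸ youngSubgroup m p x.1.1) = x.2
          ∧ s⁻¹ * g * s ∈ youngSubgroup m p x.1.1} = p ^ numCycles g := by
  let e := (Equiv.ofBijective _ (youngCosetLabel_bijective m p)).subtypeEquiv
    (q := fun f => ∀ k, f (g k) = f k) fun x => exists_conj_mem_youngSubgroup_iff x.1.2 g x.2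
  rw [Nat.card_congr e, Perm.card_invariant_fun, Perm.card_quotient_sameCycle,
    Nat.card_eq_fintype_card, Fintype.card_fin, Fintype.card_fin, numCycles]

/-- For every positive integer `m` and every `p ≥ 1`, and every `g ∈ Σ_m` whose cycle
type has `l` cycles, the number of pairs `(H, s)` — where `H = Σ_{i₁} × ⋯ × Σ_{i_p}`
ranges over Young subgroups with `i₁ + ⋯ + i_p = m`, and `s` ranges over cosets of `H`
in `Σ_m` admitting a representative with `s⁻¹gs ∈ H` — equals `p^l`. -/
theorem card_young_cosets_conj_eq_pow
    (m p : ℕ) (hm : 0 < m) (hp : 1 ≤ p) (g : Perm (Fin m)) :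
    Nat.card
      {x : Σ i : {i : Fin p → ℕ // ∑ j, i j = m}, Perm (Fin m) ⧸ youngSubgroup m p i.1 //
        ∃ s : Perm (Fin m), (QuotientGroup.mk s : Perm (Fin m) ⧸ youngSubgroup m p x.1.1) = x.2
          ∧ s⁻¹ * g * s ∈ youngSubgroup m p x.1.1} = p ^ numCycles g :=
  card_young_cosets_conj_eq_pow_general m p g
end

section
/- For every positive integer m and integer p ≥ 1, the endomorphism t(m,p) of the space of integer-valued class functions on Σ_m, given by the sum over all ordered p-tuples (i₁,…,i_p) with i₁+⋯+i_p = m of Ind ∘ Res along the Young subgroup Σ_{i₁} × ⋯ × Σ_{i_p}, is diagonal in the basis of characteristic functions of conjugacy classes, with eigenvalue p^{l_c} on the class c, where l_c is the number of cycles in the cycle type of c. -/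
open Equiv

/-- Integer-valued class functions on a group `G`. -/
def IntClassFun (G : Type*) [Group G] : Type _ :=
  {f : G → ℤ // ∀ x y : G, f (y * x * y⁻¹) = f x}

open Classical

/-- `Ind_H^G ∘ Res_H^G` applied to a class function `f`, evaluated at `x`:
`Σ_{s ∈ H\G} f₀(s⁻¹ x s)`, where `f₀` is the restriction of `f` to `H` extended by
zero; the sum is over the cosets of `H` in `G`. -/
noncomputable def indRes {G : Type*} [Group G] (H : Subgroup G)
    (f : IntClassFun G) (x : G) : ℤ :=
  ∑ᶠ q : G ⧸ H, Quotient.liftOn' q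
    (fun s => if s⁻¹ * x * s ∈ H then f.1 (s⁻¹ * x * s) else 0)
    (by
      intro s t hst
      have h1 : s⁻¹ * t ∈ H := QuotientGroup.leftRel_apply.mp hst
      have key : t⁻¹ * x * t = (s⁻¹ * t)⁻¹ * (s⁻¹ * x * s) * (s⁻¹ * t) := by group
      show (if s⁻¹ * x * s ∈ H then f.1 (s⁻¹ * x * s) else 0)
          = (if t⁻¹ * x * t ∈ H then f.1 (t⁻¹ * x * t) else 0)
      rw [key]
      by_cases hc : s⁻¹ * x * s ∈ H
      · rw [if_pos hc, if_pos (H.mul_mem (H.mul_mem (H.inv_mem h1) hc) h1)]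
        simpa using (f.2 (s⁻¹ * x * s) (s⁻¹ * t)⁻¹).symm
      · have hnc : ¬ (s⁻¹ * t)⁻¹ * (s⁻¹ * x * s) * (s⁻¹ * t) ∈ H := by
          intro hmem
          apply hc
          have hs : s⁻¹ * x * s =
              (s⁻¹ * t) * ((s⁻¹ * t)⁻¹ * (s⁻¹ * x * s) * (s⁻¹ * t)) * (s⁻¹ * t)⁻¹ := by
            group
          rw [hs]
          exact H.mul_mem (H.mul_mem h1 hmem) (H.inv_mem h1)
        rw [if_neg hc, if_neg hnc])

/-!
For a class function `f`, the summand of `Ind_H^G Res_H^G f (x)` at the coset `sH` is `f x` if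
`x` fixes `sH` and `0` otherwise, so the sum is `f x` times the number of fixed points of `x` on
`G ⧸ H`. The Young subgroup `Y_i` is the stabilizer of the labelling `Fin m → Fin p` sending `k`
to its block, so `Σ_m ⧸ Y_i` is, as a `Σ_m`-set, the orbit of labellings with fibre sizes `i`.
Summing over all compositions `i` therefore counts all `x`-invariant labellings
`Fin m → Fin p`, i.e. functions on the cycles of `x`: there are `p ^ l_x` of them, and
`l_x = l_g` when `x` is conjugate to `g`.
-/

open MulAction Finset Equiv.Perm

attribute [local instance] arrowAction

theorem indRes_eq_card_fixedBy_mul {G : Type*} [Group G] [Finite G] (H : Subgroup G)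
    (f : IntClassFun G) (x : G) :
    indRes H f x = Nat.card (fixedBy (G ⧸ H) x) * f.1 x := by
  have := Fintype.ofFinite (G ⧸ H)
  calc indRes H f x = ∑ᶠ q : G ⧸ H, if q ∈ fixedBy (G ⧸ H) x then f.1 x else 0 := by
        refine finsum_congr fun q => ?_
        induction q using QuotientGroup.induction_on with
        | H s =>
          have hfix : (s : G ⧸ H) ∈ fixedBy (G ⧸ H) x ↔ s⁻¹ * x * s ∈ H := by
            rw [mem_fixedBy, eq_comm, MulAction.Quotient.smul_coe, QuotientGroup.eq, smul_eq_mul,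
              mul_assoc]
          have hconj : f.1 (s⁻¹ * x * s) = f.1 x := by simpa using f.2 x s⁻¹
          simp only [Quotient.liftOn'_mk'', hfix, hconj]
    _ = Nat.card (fixedBy (G ⧸ H) x) * f.1 x := by
        rw [finsum_eq_sum_of_fintype, sum_ite, sum_const_zero, sum_const, nsmul_eq_mul, add_zero,
          ← Fintype.card_subtype, Nat.card_eq_fintype_card]

section Stabilizer

variable {G X : Type*} [Group G] [MulAction G X]

theorem orbitEquivQuotientStabilizer_symm_smul (b : X) (x : G) (q : G ⧸ stabilizer G b) :
    ((orbitEquivQuotientStabilizer G b).symm (x • q) : X)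
      = x • (orbitEquivQuotientStabilizer G b).symm q := by
  induction q using QuotientGroup.induction_on with
  | H g =>
    rw [MulAction.Quotient.smul_coe, orbitEquivQuotientStabilizer_symm_apply,
      orbitEquivQuotientStabilizer_symm_apply, smul_eq_mul, mul_smul]

theorem card_fixedBy_quotient_stabilizer (b : X) (x : G) :
    Nat.card (fixedBy (G ⧸ stabilizer G b) x)
      = Nat.card {c : X // c ∈ orbit G b ∧ x • c = c} := by
  let e := (orbitEquivQuotientStabilizer G b).symm
  refine Nat.card_congr ((e.subtypeEquiv fun q => ?_).trans
    (Equiv.subtypeSubtypeEquivSubtypeInter (· ∈ orbit G b) fun c => x • c = c))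
  rw [mem_fixedBy, ← e.injective.eq_iff, Subtype.ext_iff, orbitEquivQuotientStabilizer_symm_smul]

end Stabilizer

theorem mem_orbit_perm_iff_card_fiber_eq {α β : Type*} [Fintype α] [DecidableEq β]
    {L L' : α → β} :
    L' ∈ orbit (Perm α) L ↔ ∀ b, #{a | L' a = b} = #{a | L a = b} := by
  simp only [← Fintype.card_subtype]
  constructor
  · rintro ⟨σ, rfl⟩ b
    exact Fintype.card_congr (σ⁻¹.subtypeEquiv fun a => Iff.rfl)
  · intro h
    let σ : Perm α := Equiv.ofFiberEquiv fun b => Fintype.equivOfCardEq (h b).symm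
    have hσ : ∀ a, L' (σ a) = L a := Equiv.ofFiberEquiv_map _
    refine ⟨σ, funext fun a => ?_⟩
    change L (σ⁻¹ a) = L' a
    rw [← hσ]
    simp

theorem mem_stabilizer_iff_sameCycle_le_ker {α β : Type*} {x : Perm α} {L : α → β} :
    x ∈ stabilizer (Perm α) L ↔ SameCycle.setoid x ≤ Setoid.ker L := by
  constructor
  · rintro h a b ⟨n, rfl⟩
    have hn : (x ^ n • L) ((x ^ n) a) = L ((x ^ n) a) :=
      congrFun ((stabilizer (Perm α) L).zpow_mem h n) _
    change L ((x ^ n)⁻¹ ((x ^ n) a)) = _ at hn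
    simpa [Setoid.ker_def] using hn
  · intro h
    exact funext fun a => h (sameCycle_symm_apply_left.2 (SameCycle.refl x a))

section Cycles

variable {α : Type*} [Fintype α] [DecidableEq α]

def cycleOrFixedPoint (x : Perm α) (a : α) : x.cycleFactorsFinset ⊕ Function.fixedPoints x :=
  if h : x a = a then .inr ⟨a, h⟩
  else .inl ⟨x.cycleOf a, cycleOf_mem_cycleFactorsFinset_iff.2 (mem_support.2 h)⟩

theorem ker_cycleOrFixedPoint (x : Perm α) :
    Setoid.ker (cycleOrFixedPoint x) = SameCycle.setoid x := by
  ext a b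
  rw [Setoid.ker_def]
  change _ ↔ x.SameCycle a b
  by_cases ha : x a = a <;> by_cases hb : x b = b <;>
    simp only [cycleOrFixedPoint, ha, hb, dite_true, dite_false, reduceCtorEq, false_iff,
      Sum.inl.injEq, Sum.inr.injEq, Subtype.mk.injEq]
  · exact ⟨fun h => by cases h; rfl, fun h => Subtype.ext (h.eq_of_left ha)⟩
  · exact fun h => hb (h.apply_eq_self_iff.1 ha)
  · exact fun h => ha (h.apply_eq_self_iff.2 hb)
  · exact (sameCycle_iff_cycleOf_eq_of_mem_support (mem_support.2 ha) (mem_support.2 hb)).symm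

theorem cycleOrFixedPoint_surjective (x : Perm α) : Function.Surjective (cycleOrFixedPoint x) := by
  rintro (⟨c, hc⟩ | ⟨a, ha⟩)
  · obtain ⟨a, hac⟩ := (mem_cycleFactorsFinset_iff.1 hc).1.nonempty_support
    have hxa : x a ≠ a := mem_support.1 (mem_cycleFactorsFinset_support_le hc hac)
    exact ⟨a, by simp only [cycleOrFixedPoint, hxa, dite_false, cycle_is_cycleOf hac hc]⟩
  · exact ⟨a, by simp only [cycleOrFixedPoint, show x a = a from ha, dite_true]⟩

theorem card_fixedBy_arrowAction (x : Perm α) (β : Type*) [Finite β] :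
    Nat.card (fixedBy (α → β) x)
      = Nat.card β ^ (#x.cycleFactorsFinset + Nat.card (Function.fixedPoints x)) :=
  calc Nat.card (fixedBy (α → β) x)
      = Nat.card {L : α → β // Setoid.ker (cycleOrFixedPoint x) ≤ Setoid.ker L} :=
        Nat.card_congr <| Equiv.subtypeEquivRight fun L => by
          rw [ker_cycleOrFixedPoint, ← mem_stabilizer_iff_sameCycle_le_ker]
          rfl
    _ = Nat.card (x.cycleFactorsFinset ⊕ Function.fixedPoints x → β) :=
        Nat.card_congr <| (Setoid.liftEquiv _).trans <|
          (Setoid.quotientKerEquivOfSurjective _ (cycleOrFixedPoint_surjective x)).arrowCongr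
            (Equiv.refl β)
    _ = _ := by rw [Nat.card_fun, Nat.card_sum, Nat.card_eq_finsetCard]

end Cycles

theorem numCycles_eq_card_cycleFactorsFinset_add_card_fixedPoints {m : ℕ} (x : Perm (Fin m)) :
    numCycles x = #x.cycleFactorsFinset + Nat.card (Function.fixedPoints x) := by
  rw [numCycles, Nat.card_eq_fintype_card, card_fixedPoints, Fintype.card_fin, cycleType_def,
    Multiset.card_map, Finset.card_def]

theorem IsConj.numCycles_eq {m : ℕ} {g x : Perm (Fin m)} (h : IsConj g x) :
    numCycles g = numCycles x := by
  rw [numCycles, numCycles, isConj_iff_cycleType_eq.1 h]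

section BlockLabel

variable {p : ℕ} (i : Fin p → ℕ)

def partialSum (c : ℕ) : ℕ := ∑ j ∈ univ.filter (fun j : Fin p => (j : ℕ) < c), i j

theorem partialSum_succ (c : Fin p) : partialSum i (c + 1) = partialSum i c + i c := by
  rw [partialSum, partialSum, add_comm _ (i c), ← sum_insert (by simp)]
  congr 1
  ext j
  simp [le_iff_eq_or_lt, Fin.val_inj]

theorem partialSum_le_sum (c : ℕ) : partialSum i c ≤ ∑ j, i j :=
  sum_le_sum_of_subset (filter_subset _ _)

theorem partialSum_of_le {c : ℕ} (hc : p ≤ c) : partialSum i c = ∑ j, i j := by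
  rw [partialSum, filter_true_of_mem fun j _ => j.2.trans_le hc]

theorem blockLabel_lt_iff {c : ℕ} (hc : c ≤ p) (k : ℕ) :
    blockLabel i k < c ↔ k < partialSum i c := by
  cases c with
  | zero => simp [partialSum]
  | succ c =>
    have hS : ∑ j with j ≤ (⟨c, hc⟩ : Fin p), i j = partialSum i (c + 1) := by
      simp only [partialSum, Fin.le_def, Nat.lt_succ_iff]
    calc blockLabel i k < c + 1 ↔ ¬ c < blockLabel i k := Nat.lt_succ_iff.trans not_lt.symm
      _ ↔ ¬ partialSum i (c + 1) ≤ k := by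
        rw [← hS]
        exact (Fin.lt_card_filter_univ_iff_apply_of_imp (j := ⟨c, hc⟩) _ fun a b hba h =>
          (sum_le_sum_of_subset (monotone_filter_right _ fun j _ hj => hj.trans hba)).trans h).not
      _ ↔ k < partialSum i (c + 1) := not_le

variable {m : ℕ}

theorem card_blockLabel_lt (hi : ∑ j, i j = m) {c : ℕ} (hc : c ≤ p) :
    #{k : Fin m | blockLabel i k < c} = partialSum i c := by
  simp only [blockLabel_lt_iff i hc, Fin.card_filter_val_lt, ← hi,
    min_eq_right (partialSum_le_sum i c)]

theorem card_blockLabel_eq (hi : ∑ j, i j = m) (c : Fin p) :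
    #{k : Fin m | blockLabel i k = c} = i c := by
  have hsplit : ({k | blockLabel i k = c} : Finset (Fin m))
      = ({k | blockLabel i k < c + 1} : Finset (Fin m))
          \ ({k | blockLabel i k < c} : Finset (Fin m)) := by
    ext k
    simp only [mem_filter, mem_sdiff, mem_univ, true_and]
    omega
  rw [hsplit, card_sdiff_of_subset (monotone_filter_right _ fun k _ hk => Nat.lt_succ_of_lt hk),
    card_blockLabel_lt i hi c.2, card_blockLabel_lt i hi c.2.le, partialSum_succ,
    Nat.add_sub_cancel_left]

def youngLabeling (hi : ∑ j, i j = m) : Fin m → Fin p := fun k =>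
  ⟨blockLabel i k, (blockLabel_lt_iff i le_rfl k).2 (partialSum_of_le i le_rfl ▸ hi ▸ k.2)⟩

theorem stabilizer_youngLabeling (hi : ∑ j, i j = m) :
    stabilizer (Perm (Fin m)) (youngLabeling i hi) = youngSubgroup m p i := by
  ext σ
  rw [mem_stabilizer_iff, funext_iff]
  change (∀ k, youngLabeling i hi (σ⁻¹ k) = youngLabeling i hi k) ↔ _
  simp only [youngLabeling, Fin.ext_iff]
  exact ⟨fun h k => by simpa using (h (σ k)).symm,
    fun h k => by simpa using (h (σ⁻¹ k)).symm⟩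

theorem card_fiber_youngLabeling (hi : ∑ j, i j = m) (c : Fin p) :
    #{k | youngLabeling i hi k = c} = i c := by
  simpa [youngLabeling, Fin.ext_iff] using card_blockLabel_eq i hi c

end BlockLabel

theorem sum_card_fixedBy_quotient_youngSubgroup {m p : ℕ} (x : Perm (Fin m)) :
    ∑ i ∈ Finset.Nat.antidiagonalTuple p m,
      Nat.card (fixedBy (Perm (Fin m) ⧸ youngSubgroup m p i) x) = p ^ numCycles x := by
  set fiberCard : (Fin m → Fin p) → Fin p → ℕ := fun L c => #{k | L k = c}
  have hmaps : ∀ L ∈ univ.filter (· ∈ fixedBy (Fin m → Fin p) x),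
      fiberCard L ∈ Finset.Nat.antidiagonalTuple p m := fun L _ => by
    rw [Finset.Nat.mem_antidiagonalTuple]
    simpa using (card_eq_sum_card_fiberwise (f := L) (s := univ) (t := univ) (by simp)).symm
  have hfiber : ∀ i ∈ Finset.Nat.antidiagonalTuple p m,
      Nat.card (fixedBy (Perm (Fin m) ⧸ youngSubgroup m p i) x)
        = #{L ∈ univ.filter (· ∈ fixedBy (Fin m → Fin p) x) | fiberCard L = i} := by
    intro i hi
    rw [← stabilizer_youngLabeling i (Finset.Nat.mem_antidiagonalTuple.1 hi),
      card_fixedBy_quotient_stabilizer, Nat.card_eq_fintype_card, Fintype.card_subtype,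
      filter_filter]
    refine congrArg card (filter_congr fun L _ => ?_)
    simp only [mem_orbit_perm_iff_card_fiber_eq, card_fiber_youngLabeling, funext_iff,
      mem_fixedBy, fiberCard]
    exact and_comm
  rw [sum_congr rfl hfiber, ← card_eq_sum_card_fiberwise hmaps, ← Fintype.card_subtype,
    ← Nat.card_eq_fintype_card, card_fixedBy_arrowAction, Nat.card_fin,
    numCycles_eq_card_cycleFactorsFinset_add_card_fixedPoints]

theorem indRes_sum_young_charFun_eq_general (m p : ℕ)
    (g : Perm (Fin m)) (δ : IntClassFun (Perm (Fin m)))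
    (hδ : ∀ x, δ.1 x = if IsConj g x then 1 else 0) :
    ∀ x : Perm (Fin m),
      (∑ᶠ (i : Fin p → ℕ) (_ : ∑ j, i j = m), indRes (youngSubgroup m p i) δ x)
        = (p : ℤ) ^ numCycles g * δ.1 x := by
  intro x
  rw [finsum_cond_eq_sum_of_cond_iff _ fun {i} _ => Finset.Nat.mem_antidiagonalTuple.symm]
  simp only [indRes_eq_card_fixedBy_mul]
  rw [← sum_mul, ← Nat.cast_sum, sum_card_fixedBy_quotient_youngSubgroup, hδ x]
  split_ifs with hconj
  · rw [hconj.numCycles_eq, Nat.cast_pow]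
  · simp

/-- For every positive integer `m` and `p ≥ 1`, the endomorphism
`t(m,p) = Σ_{i₁+⋯+i_p=m} Ind ∘ Res` of integer-valued class functions on `Σ_m` is
diagonal in the basis of characteristic functions of conjugacy classes, with eigenvalue
`p^{l_c}` on the class `c`, where `l_c` is the number of cycles of `c`: applied to the
characteristic function `δ` of the conjugacy class of `g`, it returns `p^{l_g}·δ`. -/
theorem indRes_sum_young_charFun_eq (m p : ℕ) (hm : 0 < m) (hp : 1 ≤ p)
    (g : Perm (Fin m)) (δ : IntClassFun (Perm (Fin m)))
    (hδ : ∀ x, δ.1 x = if IsConj g x then 1 else 0) :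
    ∀ x : Perm (Fin m),
      (∑ᶠ (i : Fin p → ℕ) (_ : ∑ j, i j = m), indRes (youngSubgroup m p i) δ x)
        = (p : ℤ) ^ numCycles g * δ.1 x :=
  indRes_sum_young_charFun_eq_general m p g δ hδ
end

section
/- Let R be a commutative Noetherian ring and I ⊆ R an ideal, and let M be a finitely generated R-module. Then the I-adic completion of M is naturally isomorphic to (I-adic completion of R) ⊗_R M; in particular the I-adic completion of R is flat as an R-module. -/
open TensorProduct

namespace AdicCompletion

variable {R : Type*} [CommRing R] (I : Ideal R)
variable {M N : Type*} [AddCommGroup M] [Module R M] [AddCommGroup N] [Module R N]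

theorem ofTensorProduct_bijective_congr (e : M ≃ₗ[R] N) :
    Function.Bijective (ofTensorProduct I M) ↔ Function.Bijective (ofTensorProduct I N) := by
  have h : ofTensorProduct I N =
      (congr I e).toLinearMap ∘ₗ ofTensorProduct I M ∘ₗ
        (AlgebraTensorModule.congr (LinearEquiv.refl _ _) e).symm.toLinearMap := by
    ext x
    simp [congr]
  rw [h]
  simp only [LinearMap.coe_comp, LinearEquiv.coe_coe, EquivLike.comp_bijective,
    EquivLike.bijective_comp]

/-- `ofTensorProduct_bijective_of_finite_of_isNoetherian` for `M` in any universe: a finite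
module is isomorphic to a quotient of some `R ^ n`, which lives in the universe of `R`. -/
theorem ofTensorProduct_bijective_of_finite_of_isNoetherian' [IsNoetherianRing R]
    [Module.Finite R M] : Function.Bijective (ofTensorProduct I M) := by
  obtain ⟨n, f, hf⟩ := Module.Finite.exists_fin' R M
  let e : ((Fin n → R) ⧸ LinearMap.ker f) ≃ₗ[R] M := f.quotKerEquivOfSurjective hf
  have : Module.Finite R ((Fin n → R) ⧸ LinearMap.ker f) := Module.Finite.equiv e.symm
  exact (ofTensorProduct_bijective_congr I e).mp
    (ofTensorProduct_bijective_of_finite_of_isNoetherian I _)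

end AdicCompletion

/-- Let `R` be a commutative Noetherian ring, `I ⊆ R` an ideal, and `M` a finitely
generated `R`-module. Then the `I`-adic completion of `M` is isomorphic to
`(I-adic completion of R) ⊗_R M`; in particular the `I`-adic completion of `R` is flat
as an `R`-module. -/
theorem adicCompletion_tensor_and_flat
    (R : Type*) [CommRing R] [IsNoetherianRing R] (I : Ideal R)
    (M : Type*) [AddCommGroup M] [Module R M] [Module.Finite R M] :
    Nonempty ((AdicCompletion I R ⊗[R] M) ≃ₗ[R] AdicCompletion I M) ∧
      Module.Flat R (AdicCompletion I R) :=
  ⟨⟨(LinearEquiv.ofBijective (AdicCompletion.ofTensorProduct I M)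
      (AdicCompletion.ofTensorProduct_bijective_of_finite_of_isNoetherian' I)).restrictScalars R⟩,
    inferInstance⟩
end

section
/- Let R be a Noetherian commutative regular local ring with maximal ideal 𝔪 and let N be a flat R-module. Then L₀N agrees with the 𝔪-adic completion of N, and L_s N = 0 for all s > 0. -/
open CategoryTheory

universe u

noncomputable section

variable (R : Type u) [CommRing R] (I : Ideal R)
variable (P : ChainComplex (ModuleCat.{u} R) ℕ)

/-- The map induced on `I`-adic completions by the differential `P.d s t` of a chain
complex `P`. -/
def completedD (s t : ℕ) :
    AdicCompletion I (P.X s) →ₗ[R] AdicCompletion I (P.X t) :=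
  (AdicCompletion.map I ((P.d s t).hom : P.X s →ₗ[R] P.X t)).restrictScalars R

/-- `L_s`, the `s`-th left derived functor of `I`-adic completion, computed as the
`s`-th homology of the `I`-adic completion of a projective (free) resolution `P`:
the quotient of `ker(completion of d : P_s → P_{s-1})` by the image of the completion
of `d : P_{s+1} → P_s` (for `s = 0` the outgoing differential `P.d 0 0` is zero). -/
def derivedCompletion (s : ℕ) : Type u :=
  LinearMap.ker (completedD R I P s (s - 1)) ⧸
    Submodule.comap (LinearMap.ker (completedD R I P s (s - 1))).subtype
      (LinearMap.range (completedD R I P (s + 1) s))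

instance (s : ℕ) : AddCommGroup (derivedCompletion R I P s) :=
  inferInstanceAs (AddCommGroup (LinearMap.ker (completedD R I P s (s - 1)) ⧸
    Submodule.comap (LinearMap.ker (completedD R I P s (s - 1))).subtype
      (LinearMap.range (completedD R I P (s + 1) s))))

instance (s : ℕ) : Module R (derivedCompletion R I P s) :=
  inferInstanceAs (Module R (LinearMap.ker (completedD R I P s (s - 1)) ⧸
    Submodule.comap (LinearMap.ker (completedD R I P s (s - 1))).subtype
      (LinearMap.range (completedD R I P (s + 1) s))))

/-!
For flat `N` the syzygies `Zₖ = ker (Pₖ → Pₖ₋₁)` (and `Z₀ = ker π`) are flat, the kernel of a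
surjection of flat modules being flat. So the resolution splices together short exact sequences
`0 → A →f B → C → 0` with `C` flat, and these stay exact after `R ⧸ J ⊗ -` (`Tor₁ (R ⧸ J, C) = 0`),
i.e. `f⁻¹ (J • B) = J • A` for every ideal `J`. Completion keeps such a sequence short exact: if a
Cauchy sequence `bₙ` in `B` maps to `0` in `Ĉ`, choose `aₙ` with `f aₙ ≡ bₙ` mod `𝔪ⁿ B`; then
`f (aₙ₊₁ - aₙ) ∈ 𝔪ⁿ B` forces `aₙ₊₁ - aₙ ∈ 𝔪ⁿ A`, so any choice of lifts is already Cauchy (the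
Mittag-Leffler input). Splicing the completed sequences back together, the completed resolution
is exact in positive degrees and has cokernel `N̂` in degree `0`.
-/

section FlatCokernel

variable {R : Type*} [CommRing R] {A B C : Type*} [AddCommGroup A] [Module R A]
  [AddCommGroup B] [Module R B] [AddCommGroup C] [Module R C] [Module.Flat R C]
  {f : A →ₗ[R] B} {g : B →ₗ[R] C}
  (hf : Function.Injective f) (hfg : Function.Exact f g) (hg : Function.Surjective g)
include hf hfg hg

theorem mem_smul_top_of_apply_mem_smul_top (J : Ideal R) {a : A}
    (ha : f a ∈ J • (⊤ : Submodule R B)) : a ∈ J • (⊤ : Submodule R A) := by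
  have hfa : (1 : R ⧸ J) ⊗ₜ[R] f a = 0 :=
    (TensorProduct.quotTensorEquivQuotSMul B J).injective
      (by simpa [Submodule.Quotient.mk_eq_zero] using ha)
  have ha' : (1 : R ⧸ J) ⊗ₜ[R] a = 0 :=
    LinearMap.lTensor_injective_of_exact_of_flat g hg f hf hfg (R ⧸ J) (by simpa using hfa)
  simpa [Submodule.Quotient.mk_eq_zero] using
    congrArg (TensorProduct.quotTensorEquivQuotSMul A J) ha'

theorem Module.Flat.of_exact_of_surjective [Module.Flat R B] : Module.Flat R A := by
  refine Module.Flat.iff_lTensor_injective'.mpr fun J => ?_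
  have hfJ : Function.Injective (f.rTensor J) := (LinearMap.lTensor_inj_iff_rTensor_inj J f).mp
    (LinearMap.lTensor_injective_of_exact_of_flat g hg f hf hfg J)
  have hBJ : Function.Injective (J.subtype.lTensor B) :=
    Module.Flat.iff_lTensor_injective'.mp inferInstance J
  have hcomp : f.rTensor R ∘ₗ J.subtype.lTensor A = J.subtype.lTensor B ∘ₗ f.rTensor J := by
    rw [LinearMap.rTensor_comp_lTensor, LinearMap.lTensor_comp_rTensor]
  refine Function.Injective.of_comp (f := f.rTensor R) ?_
  rw [← LinearMap.coe_comp, hcomp, LinearMap.coe_comp]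
  exact hBJ.comp hfJ

end FlatCokernel

theorem Module.Flat.ker_of_flat_range {R B C : Type*} [CommRing R] [AddCommGroup B] [Module R B]
    [AddCommGroup C] [Module R C] [Module.Flat R B] (g : B →ₗ[R] C)
    [Module.Flat R (LinearMap.range g)] : Module.Flat R (LinearMap.ker g) := by
  have := Module.Flat.of_exact_of_surjective (LinearMap.ker g.rangeRestrict).injective_subtype
    (LinearMap.exact_subtype_ker_map _) g.surjective_rangeRestrict
  rwa [LinearMap.ker_rangeRestrict] at this

theorem Function.Exact.exists_apply_sub_mem_smul_top {R A B C : Type*} [CommRing R]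
    [AddCommGroup A] [Module R A] [AddCommGroup B] [Module R B] [AddCommGroup C] [Module R C]
    {f : A →ₗ[R] B} {g : B →ₗ[R] C} (hfg : Function.Exact f g) (hg : Function.Surjective g)
    {J : Ideal R} {b : B} (hb : g b ∈ J • (⊤ : Submodule R C)) :
    ∃ a, f a - b ∈ J • (⊤ : Submodule R B) := by
  rw [← LinearMap.range_eq_top.mpr hg, LinearMap.range_eq_map, ← Submodule.map_smul''] at hb
  obtain ⟨d, hd, hgd⟩ := hb
  obtain ⟨a, ha⟩ := (hfg (b - d)).mp (by rw [map_sub, hgd, sub_self])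
  exact ⟨a, by simpa [ha] using Submodule.neg_mem _ hd⟩

namespace AdicCompletion

variable {R : Type*} [CommRing R] (I : Ideal R) {A B C : Type*} [AddCommGroup A] [Module R A]
  [AddCommGroup B] [Module R B] [AddCommGroup C] [Module R C]

section FlatCokernel

variable [Module.Flat R C] {f : A →ₗ[R] B} {g : B →ₗ[R] C}
  (hf : Function.Injective f) (hfg : Function.Exact f g) (hg : Function.Surjective g)
include hf hfg hg

theorem map_injective_of_flat : Function.Injective (map I f) := by
  rw [← LinearMap.ker_eq_bot, LinearMap.ker_eq_bot']
  intro x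
  induction x using AdicCompletion.induction_on with | h a => ?_
  intro hx
  refine mk_zero_of _ _ _ ⟨0, fun n _ ↦ ⟨n, le_rfl, n, le_rfl, ?_⟩⟩
  exact mem_smul_top_of_apply_mem_smul_top hf hfg hg _
    (by simpa using congrArg (fun x ↦ x.val n) hx)

theorem map_exact_of_flat : Function.Exact (map I f) (map I g) := by
  refine LinearMap.exact_of_comp_eq_zero_of_ker_le_range ?_ fun y ↦ ?_
  · rw [map_comp, hfg.linearMap_comp_eq_zero, map_zero]
  induction y using AdicCompletion.induction_on with | h b => ?_
  intro hb
  have hgb (n : ℕ) : g (b n) ∈ (I ^ n • ⊤ : Submodule R C) := by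
    simpa using congrArg (fun x ↦ x.val n) hb
  choose a ha using fun n ↦ hfg.exists_apply_sub_mem_smul_top hg (hgb n)
  have hcauchy (n : ℕ) : a n ≡ a (n + 1) [SMOD (I ^ n • ⊤ : Submodule R A)] := by
    rw [SModEq.comm, SModEq.sub_mem]
    refine mem_smul_top_of_apply_mem_smul_top hf hfg hg _ ?_
    have hb' : b (n + 1) - b n ∈ (I ^ n • ⊤ : Submodule R B) := by
      rw [← SModEq.sub_mem, SModEq.comm]; exact b.property n.le_succ
    have ha' : f (a (n + 1)) - b (n + 1) ∈ (I ^ n • ⊤ : Submodule R B) :=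
      Submodule.smul_mono_left (Ideal.pow_le_pow_right n.le_succ) (ha (n + 1))
    convert Submodule.add_mem _ (Submodule.sub_mem _ ha' (ha n)) hb' using 1
    simp only [map_sub]; abel
  refine ⟨mk I A (AdicCauchySequence.mk I A a hcauchy), ?_⟩
  ext n
  simpa [map_mk, Submodule.Quotient.eq] using ha n

end FlatCokernel

variable {f : A →ₗ[R] B} {g : B →ₗ[R] C}

theorem map_exact_of_surjective_of_flat [Module.Flat R C] (hfg : Function.Exact f g)
    (hg : Function.Surjective g) : Function.Exact (map I f) (map I g) := by
  let f' : A →ₗ[R] LinearMap.ker g := f.codRestrict _ fun a ↦ hfg.apply_apply_eq_zero a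
  have hf' : Function.Surjective f' := fun ⟨b, hb⟩ ↦
    let ⟨a, ha⟩ := (hfg b).mp hb; ⟨a, Subtype.ext ha⟩
  have hff' : f = (LinearMap.ker g).subtype ∘ₗ f' :=
    (LinearMap.subtype_comp_codRestrict _ _ _).symm
  rw [hff', ← map_comp, (map_surjective I hf').comp_exact_iff_exact]
  exact map_exact_of_flat I (LinearMap.ker g).injective_subtype
    (LinearMap.exact_subtype_ker_map g) hg

theorem map_exact_of_flat_range [Module.Flat R (LinearMap.range g)] (hfg : Function.Exact f g)
    (hι : Function.Injective (map I (LinearMap.range g).subtype)) :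
    Function.Exact (map I f) (map I g) := by
  have hg : g = (LinearMap.range g).subtype ∘ₗ g.rangeRestrict :=
    (LinearMap.subtype_comp_codRestrict _ _ _).symm
  rw [hg, ← map_comp, hι.comp_exact_iff_exact]
  rw [hg, (LinearMap.range g).injective_subtype.comp_exact_iff_exact] at hfg
  exact map_exact_of_surjective_of_flat I hfg g.surjective_rangeRestrict

theorem map_subtype_ker_injective_of_flat_range [Module.Flat R (LinearMap.range g)] :
    Function.Injective (map I (LinearMap.ker g).subtype) := by
  have := map_injective_of_flat I (LinearMap.ker g.rangeRestrict).injective_subtype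
    (LinearMap.exact_subtype_ker_map _) g.surjective_rangeRestrict
  rwa [LinearMap.ker_rangeRestrict] at this

end AdicCompletion

section DerivedCompletion

variable {R : Type u} [CommRing R] (I : Ideal R) (P : ChainComplex (ModuleCat.{u} R) ℕ)

theorem completedD_self (s : ℕ) : completedD R I P s s = 0 := by
  rw [completedD, P.shape s s (by simp), ModuleCat.hom_zero, AdicCompletion.map_zero,
    LinearMap.restrictScalars_zero]

theorem derivedCompletion_subsingleton_of_exact {s : ℕ}
    (h : Function.Exact (completedD R I P (s + 1) s) (completedD R I P s (s - 1))) :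
    Subsingleton (derivedCompletion R I P s) :=
  Submodule.Quotient.subsingleton_iff.mpr (Submodule.eq_top_iff'.mpr fun x ↦ (h x).mp x.2)

def derivedCompletionZeroEquiv {M : Type*} [AddCommGroup M] [Module R M]
    (φ : AdicCompletion I (P.X 0) →ₗ[R] M) (hφ : Function.Surjective φ)
    (h : Function.Exact (completedD R I P 1 0) φ) : derivedCompletion R I P 0 ≃ₗ[R] M :=
  let K := LinearMap.ker (completedD R I P 0 (0 - 1))
  have hK (x) : x ∈ K := by simp [K, completedD_self]
  have hker : LinearMap.ker (φ ∘ₗ K.subtype) =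
      Submodule.comap K.subtype (LinearMap.range (completedD R I P 1 0)) := by
    rw [LinearMap.ker_comp, h.linearMap_ker_eq]
  (Submodule.quotEquivOfEq _ _ hker.symm).trans
    ((φ ∘ₗ K.subtype).quotKerEquivOfSurjective fun y ↦
      let ⟨x, hx⟩ := hφ y; ⟨⟨x, hK x⟩, hx⟩)

end DerivedCompletion

section Resolution

variable {R : Type u} [CommRing R] (I : Ideal R) {P : ChainComplex (ModuleCat.{u} R) ℕ}
  {N : Type u} [AddCommGroup N] [Module R N] [Module.Flat R N]
  (hflat : ∀ k, Module.Flat R (P.X k)) {π : P.X 0 ⟶ ModuleCat.of R N}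
  (hπ : Function.Surjective π) (hexact0 : Function.Exact (P.d 1 0) π)
  (hexact : ∀ k, Function.Exact (P.d (k + 2) (k + 1)) (P.d (k + 1) k))
include hflat hπ hexact0 hexact

theorem flat_range_d : ∀ k, Module.Flat R (LinearMap.range (P.d (k + 1) k).hom)
  | 0 => by
    have := hflat 0
    have h0 : Function.Exact (P.d 1 0).hom π.hom := hexact0
    rw [← h0.linearMap_ker_eq]
    exact Module.Flat.of_exact_of_surjective (LinearMap.ker π.hom).injective_subtype
      (LinearMap.exact_subtype_ker_map _) hπ
  | k + 1 => by
    have := hflat (k + 1)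
    have := flat_range_d k
    have hk : Function.Exact (P.d (k + 2) (k + 1)).hom (P.d (k + 1) k).hom := hexact k
    rw [← hk.linearMap_ker_eq]
    exact Module.Flat.ker_of_flat_range _

theorem map_subtype_range_d_injective :
    ∀ k, Function.Injective (AdicCompletion.map I (LinearMap.range (P.d (k + 1) k).hom).subtype)
  | 0 => by
    have h0 : Function.Exact (P.d 1 0).hom π.hom := hexact0
    rw [← h0.linearMap_ker_eq]
    exact AdicCompletion.map_injective_of_flat I (LinearMap.ker π.hom).injective_subtype
      (LinearMap.exact_subtype_ker_map _) hπ
  | k + 1 => by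
    have := flat_range_d hflat hπ hexact0 hexact k
    have hk : Function.Exact (P.d (k + 2) (k + 1)).hom (P.d (k + 1) k).hom := hexact k
    rw [← hk.linearMap_ker_eq]
    exact AdicCompletion.map_subtype_ker_injective_of_flat_range I

theorem exact_completedD (k : ℕ) :
    Function.Exact (completedD R I P (k + 2) (k + 1)) (completedD R I P (k + 1) k) :=
  have := flat_range_d hflat hπ hexact0 hexact k
  AdicCompletion.map_exact_of_flat_range I (hexact k)
    (map_subtype_range_d_injective I hflat hπ hexact0 hexact k)

end Resolution

theorem derivedCompletion_of_flat
    [IsLocalRing R]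
    (n : ℕ) (u : Fin n → R)
    (N : Type u) [AddCommGroup N] [Module R N] [Module.Flat R N]
    (hfree : ∀ k, Module.Free R (P.X k))
    (π : P.X 0 ⟶ ModuleCat.of R N) (hπ : Function.Surjective π)
    (hexact0 : Function.Exact (P.d 1 0) π)
    (hexact : ∀ k, Function.Exact (P.d (k + 2) (k + 1)) (P.d (k + 1) k)) :
    Nonempty (derivedCompletion R (IsLocalRing.maximalIdeal R) P 0 ≃ₗ[R]
        AdicCompletion (IsLocalRing.maximalIdeal R) N) ∧
      ∀ s : ℕ, 0 < s →
        Subsingleton (derivedCompletion R (IsLocalRing.maximalIdeal R) P s) := by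
  have hflat (k : ℕ) : Module.Flat R (P.X k) := have := hfree k; inferInstance
  set 𝔪 := IsLocalRing.maximalIdeal R
  have hexact0' : Function.Exact (completedD R 𝔪 P 1 0)
      ((AdicCompletion.map 𝔪 π.hom).restrictScalars R) :=
    AdicCompletion.map_exact_of_surjective_of_flat 𝔪 hexact0 hπ
  refine ⟨⟨derivedCompletionZeroEquiv 𝔪 P _ (AdicCompletion.map_surjective 𝔪 hπ) hexact0'⟩,
    fun s hs ↦ ?_⟩
  obtain ⟨k, rfl⟩ := Nat.exists_eq_add_one_of_ne_zero hs.ne'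
  exact derivedCompletion_subsingleton_of_exact 𝔪 P
    (exact_completedD 𝔪 hflat hπ hexact0 hexact k)
end
end
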